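/- For any linear subspace T of B(H_d), there exist two quantum operations E and F from B(H_d) to B(H_{d'}) for some d', with Choi-Kraus operators {E_j} and {F_k} respectively, such that T = span{E_j†F_k : all j,k}. -/

import Mathlib

/-!
Choose a spanning family `A₁, …, Aₘ` of `T` and rescale it by some `a ≠ 0` so that
`|a|² ∑ Aᵢ† Aᵢ ≤ 1`; the positive defect `1 - |a|² ∑ Aᵢ† Aᵢ` is then some `B† B`.
On `H_d ⊕ H_d` the operators `(0; B)` and `(a Aᵢ; 0)` are Choi-Kraus operators of a quantum
operation, and so is the single isometry `(1; 0)`. The products of the adjoint of this isometry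
with the former are `0` and the `a Aᵢ`, which span `T`.
-/

open Matrix
open scoped ComplexOrder

theorem CStarAlgebra.exists_pos_smul_add_star_mul_self_eq_one {A : Type*} [CStarAlgebra A]
    [PartialOrder A] [StarOrderedRing A] {x : A} (hx : 0 ≤ x) :
    ∃ c : ℝ, 0 < c ∧ ∃ b : A, c • x + star b * b = 1 := by
  set c : ℝ := (‖x‖ + 1)⁻¹
  have hc : 0 < c := by positivity
  have hcx : c • x ≤ 1 := by
    rw [← CStarAlgebra.norm_le_one_iff_of_nonneg _ (smul_nonneg hc.le hx), norm_smul,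
      Real.norm_of_nonneg hc.le, inv_mul_le_iff₀ (by positivity)]
    linarith
  obtain ⟨b, hb⟩ := CStarAlgebra.nonneg_iff_eq_star_mul_self.mp (sub_nonneg.mpr hcx)
  exact ⟨c, hc, b, by rw [← hb, add_sub_cancel]⟩

namespace Matrix

theorem PosSemidef.exists_pos_smul_add_conjTranspose_mul_self_eq_one {n : Type*} [Fintype n]
    [DecidableEq n] {S : Matrix n n ℂ} (hS : S.PosSemidef) :
    ∃ c : ℝ, 0 < c ∧ ∃ B : Matrix n n ℂ, c • S + Bᴴ * B = 1 := by
  open scoped MatrixOrder Matrix.Norms.L2Operator in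
  exact CStarAlgebra.exists_pos_smul_add_star_mul_self_eq_one hS.nonneg

theorem conjTranspose_fromRows_mul_fromRows {R m₁ m₂ n : Type*} [Semiring R] [StarRing R]
    [Fintype m₁] [Fintype m₂] (A₁ B₁ : Matrix m₁ n R) (A₂ B₂ : Matrix m₂ n R) :
    (fromRows A₁ A₂)ᴴ * fromRows B₁ B₂ = A₁ᴴ * B₁ + A₂ᴴ * B₂ := by
  rw [conjTranspose_fromRows_eq_fromCols_conjTranspose, fromCols_mul_fromRows]

-- Both blocks need explicit types: with an undetermined row index, `*` falls back to the
-- default `HMul` instance of `CStarMatrix`.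
theorem conjTranspose_fromRows_one_zero_mul_fromRows {R m n : Type*} [Semiring R] [StarRing R]
    [Fintype m] [Fintype n] [DecidableEq n] (X : Matrix n n R) (Y : Matrix m n R) :
    (fromRows (1 : Matrix n n R) (0 : Matrix m n R))ᴴ * fromRows X Y = X := by
  simp [conjTranspose_fromRows_mul_fromRows]

theorem conjTranspose_submatrix_mul_submatrix {R l m n : Type*} [Semiring R] [StarRing R]
    [Fintype l] [Fintype m] (e : l ≃ m) (A B : Matrix m n R) :
    (A.submatrix e id)ᴴ * B.submatrix e id = Aᴴ * B := by
  rw [conjTranspose_submatrix, submatrix_mul_equiv _ _ _ e, submatrix_id_id]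

end Matrix

def IsKrausFamily {ι m n : Type*} [Fintype ι] [Fintype m] [DecidableEq n]
    (K : ι → Matrix m n ℂ) : Prop :=
  ∑ i, (K i)ᴴ * K i = 1

theorem IsKrausFamily.submatrix {ι l m n : Type*} [Fintype ι] [Fintype l] [Fintype m]
    [DecidableEq n] {K : ι → Matrix m n ℂ} (hK : IsKrausFamily K) (e : l ≃ m) :
    IsKrausFamily fun i => (K i).submatrix e id := by
  simpa only [IsKrausFamily, conjTranspose_submatrix_mul_submatrix] using hK

theorem isKrausFamily_fromRows_one_zero {ι m n : Type*} [Unique ι] [Fintype m] [Fintype n]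
    [DecidableEq n] :
    IsKrausFamily fun _ : ι => fromRows (1 : Matrix n n ℂ) (0 : Matrix m n ℂ) := by
  simp [IsKrausFamily, conjTranspose_fromRows_one_zero_mul_fromRows]

theorem exists_isKrausFamily_cons_fromRows_smul {k : ℕ} {m n : Type*} [Fintype m] [Fintype n]
    [DecidableEq n] (A : Fin k → Matrix m n ℂ) :
    ∃ a : ℂ, a ≠ 0 ∧ ∃ B : Matrix n n ℂ,
      IsKrausFamily (Fin.cons (fromRows 0 B) fun i => fromRows (a • A i) 0) := by
  have hS : (∑ i, (A i)ᴴ * A i).PosSemidef :=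
    posSemidef_sum _ fun i _ => posSemidef_conjTranspose_mul_self (A i)
  obtain ⟨c, hc, B, hB⟩ := hS.exists_pos_smul_add_conjTranspose_mul_self_eq_one
  have hscale : ∀ X : Matrix m n ℂ, ((√c : ℂ) • X)ᴴ * ((√c : ℂ) • X) = c • (Xᴴ * X) := by
    intro X
    rw [conjTranspose_smul, Matrix.smul_mul, Matrix.mul_smul, smul_smul, Complex.star_def,
      Complex.conj_ofReal, ← Complex.ofReal_mul, Real.mul_self_sqrt hc.le, Complex.coe_smul]
  refine ⟨√c, by exact_mod_cast (Real.sqrt_pos.mpr hc).ne', B, ?_⟩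
  simp only [IsKrausFamily, Fin.sum_univ_succ, Fin.cons_zero, Fin.cons_succ,
    conjTranspose_fromRows_mul_fromRows, hscale]
  simpa [← Finset.smul_sum, add_comm] using hB

/-- every subspace `T` of `B(H_d)` arises as
`span{E_j† F_k}` for the Choi-Kraus operators of two quantum operations. -/
theorem subspace_from_two_quantum_operations {d : ℕ}
    (T : Submodule ℂ (Matrix (Fin d) (Fin d) ℂ)) :
    ∃ (d' n0 n1 : ℕ) (E : Fin n0 → Matrix (Fin d') (Fin d) ℂ)
      (F : Fin n1 → Matrix (Fin d') (Fin d) ℂ),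
      (∑ j, (E j)ᴴ * E j = 1) ∧ (∑ k, (F k)ᴴ * F k = 1) ∧
      T = Submodule.span ℂ (Set.range fun jk : Fin n0 × Fin n1 => (E jk.1)ᴴ * F jk.2) := by
  obtain ⟨m, A, rfl⟩ :=
    Submodule.fg_iff_exists_fin_generating_family.mp (IsNoetherian.noetherian T)
  obtain ⟨a, ha, B, hF⟩ := exists_isKrausFamily_cons_fromRows_smul A
  set F : Fin (m + 1) → Matrix (Fin d ⊕ Fin d) (Fin d) ℂ :=
    Fin.cons (fromRows 0 B) fun i => fromRows (a • A i) 0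
  let e : Fin (d + d) ≃ Fin d ⊕ Fin d := finSumFinEquiv.symm
  refine ⟨d + d, 1, m + 1, fun _ => (fromRows (1 : Matrix (Fin d) (Fin d) ℂ) 0).submatrix e id,
    fun k => (F k).submatrix e id, isKrausFamily_fromRows_one_zero.submatrix e,
    hF.submatrix e, ?_⟩
  let G : Fin (m + 1) → Matrix (Fin d) (Fin d) ℂ := Fin.cons 0 fun i => a • A i
  have hEF : ∀ k, (fromRows (1 : Matrix (Fin d) (Fin d) ℂ) (0 : Matrix (Fin d) (Fin d) ℂ))ᴴ
      * F k = G k := fun k => by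
    cases k using Fin.cases <;> simp [F, G, conjTranspose_fromRows_one_zero_mul_fromRows]
  simp only [conjTranspose_submatrix_mul_submatrix, hEF]
  change _ = Submodule.span ℂ (Set.range (G ∘ Prod.snd))
  rw [Prod.snd_surjective.range_comp G, Fin.range_cons, Submodule.span_insert_zero,
    Set.range_smul, Submodule.span_smul_eq_of_isUnit _ _ ha.isUnit]
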